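/- Suppose ε > ε_K and E_g + ε < 0, and let η > 0 be the unique solution of inf_{a ≠ 0} E′(η, a) = E_g + ε. Let M = 4 d⁴/(κ η²) (equivalently, the total measurement number M_tot = 4 d² · M equals α(κ)·β(d)/(16 η²) with α(κ) = 256/κ and β(d) = d⁶). Suppose the entries {Ĥ_{kq} : k ≤ q} ∪ {Ŝ_{kq} : k ≤ q} are mutually independent complex random variables with E[Ĥ_{kq}] = H_{kq}, E[Ŝ_{kq}] = S_{kq}, Var(Ĥ_{kq}) ≤ 2 C_H²/M and Var(Ŝ_{kq}) ≤ 2 C_S²/M. Then P( E_g ≤ Ê_min ≤ E_g + ε ) ≥ 1 − κ, where Ê_min(ω) = inf_{a ≠ 0} (⟨Ĥ(ω)⟩(a) + C_H η)/(⟨Ŝ(ω)⟩(a) + C_S η). -/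

import Mathlib

open Matrix
open scoped ComplexOrder

/-- Spectral norm (L2 operator norm) of a complex square matrix. -/
noncomputable def specNorm {d : ℕ} (A : Matrix (Fin d) (Fin d) ℂ) : ℝ :=
  ‖Matrix.toEuclideanCLM (𝕜 := ℂ) A‖

/-- Rayleigh quotient ⟨A⟩(a) = (a† A a)/(a† a) (real-valued for Hermitian `A`). -/
noncomputable def rq {d : ℕ} (A : Matrix (Fin d) (Fin d) ℂ) (a : Fin d → ℂ) : ℝ :=
  (star a ⬝ᵥ A.mulVec a).re / (star a ⬝ᵥ a).re

open MeasureTheory ProbabilityTheory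

section Aux

lemma dot_self_re {d : ℕ} (a : Fin d → ℂ) :
    (star a ⬝ᵥ a).re = ∑ k, ‖a k‖ ^ 2 := by
  simp only [dotProduct, Pi.star_apply, Complex.re_sum]
  congr 1; ext k
  rw [Complex.star_def, ← Complex.normSq_eq_conj_mul_self]
  rw [Complex.normSq_eq_norm_sq]
  simp [← Complex.ofReal_pow]

lemma dot_self_pos {d : ℕ} {a : Fin d → ℂ} (ha : a ≠ 0) :
    0 < (star a ⬝ᵥ a).re := by
  rw [dot_self_re]
  obtain ⟨k, hk⟩ := Function.ne_iff.mp ha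
  have hk' : 0 < ‖a k‖ := norm_pos_iff.mpr hk
  have : (0:ℝ) < ‖a k‖ ^ 2 := by positivity
  exact lt_of_lt_of_le this (Finset.single_le_sum (f := fun k => ‖a k‖^2)
    (fun i _ => by positivity) (Finset.mem_univ k))

lemma norm_quad_le {d : ℕ} (A : Matrix (Fin d) (Fin d) ℂ) (c : ℝ) (hc0 : 0 ≤ c)
    (hc : ∀ k q, ‖A k q‖ ≤ c) (a : Fin d → ℂ) :
    ‖star a ⬝ᵥ A.mulVec a‖ ≤ d * c * (star a ⬝ᵥ a).re := by
  have h1 : ‖star a ⬝ᵥ A.mulVec a‖ ≤ ∑ k, ∑ q, c * (‖a k‖ * ‖a q‖) := by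
    refine (norm_sum_le _ _).trans (Finset.sum_le_sum fun k _ => ?_)
    rw [norm_mul, Pi.star_apply, norm_star]
    have h2 : ‖(A.mulVec a) k‖ ≤ ∑ q, c * ‖a q‖ := by
      rw [Matrix.mulVec, dotProduct]
      refine (norm_sum_le _ _).trans (Finset.sum_le_sum fun q _ => ?_)
      rw [norm_mul]
      exact mul_le_mul_of_nonneg_right (hc k q) (norm_nonneg _)
    calc ‖a k‖ * ‖(A.mulVec a) k‖ ≤ ‖a k‖ * ∑ q, c * ‖a q‖ :=
          mul_le_mul_of_nonneg_left h2 (norm_nonneg _)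
      _ = ∑ q, c * (‖a k‖ * ‖a q‖) := by rw [Finset.mul_sum]; congr 1; ext q; ring
  have h3 : ∑ k, ∑ q, c * (‖a k‖ * ‖a q‖) = c * (∑ k, ‖a k‖) ^ 2 := by
    rw [sq, Finset.sum_mul_sum]
    rw [Finset.mul_sum]
    congr 1; ext k
    rw [Finset.mul_sum]
  have h4 : (∑ k, ‖a k‖) ^ 2 ≤ (d:ℝ) * ∑ k, ‖a k‖ ^ 2 := by
    simpa using sq_sum_le_card_mul_sum_sq (s := Finset.univ) (f := fun k : Fin d => ‖a k‖)
  rw [dot_self_re]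
  calc ‖star a ⬝ᵥ A.mulVec a‖ ≤ c * (∑ k, ‖a k‖) ^ 2 := h1.trans_eq h3
    _ ≤ c * ((d:ℝ) * ∑ k, ‖a k‖ ^ 2) := mul_le_mul_of_nonneg_left h4 hc0
    _ = d * c * ∑ k, ‖a k‖ ^ 2 := by ring

lemma rq_sub {d : ℕ} (A B : Matrix (Fin d) (Fin d) ℂ) {a : Fin d → ℂ} (ha : a ≠ 0)
    (c : ℝ) (hc0 : 0 ≤ c) (hc : ∀ k q, ‖A k q - B k q‖ ≤ c) :
    |rq A a - rq B a| ≤ d * c := by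
  have hn := dot_self_pos ha
  have key : rq A a - rq B a = (star a ⬝ᵥ (A - B).mulVec a).re / (star a ⬝ᵥ a).re := by
    rw [rq, rq, div_sub_div_same, Matrix.sub_mulVec, dotProduct_sub, Complex.sub_re]
  rw [key, abs_div, abs_of_pos hn, div_le_iff₀ hn]
  calc |(star a ⬝ᵥ (A - B).mulVec a).re| ≤ ‖star a ⬝ᵥ (A - B).mulVec a‖ :=
        Complex.abs_re_le_norm _
    _ ≤ d * c * (star a ⬝ᵥ a).re := norm_quad_le _ c hc0 (fun k q => by
        simpa using hc k q) a

lemma det_lemma {d : ℕ} (hd : 1 ≤ d) (H S Hh Sh : Matrix (Fin d) (Fin d) ℂ)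
    (CH CS Eg ε η : ℝ) (hCH : 0 < CH) (hCS : 0 < CS) (hη : 0 < η) (hε0 : 0 < ε)
    (hSpos : ∀ a : Fin d → ℂ, a ≠ 0 → 0 < rq S a)
    (hHS' : ∀ a : Fin d → ℂ, a ≠ 0 → Eg * rq S a ≤ rq H a)
    (hneg : Eg + ε < 0)
    (hsol : (⨅ a : {a : Fin d → ℂ // a ≠ 0},
        (rq H a.1 + 2 * CH * η) / (rq S a.1 + 2 * CS * η)) = Eg + ε)
    (hHc : ∀ a : Fin d → ℂ, a ≠ 0 → |rq Hh a - rq H a| ≤ CH * η)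
    (hSc : ∀ a : Fin d → ℂ, a ≠ 0 → |rq Sh a - rq S a| ≤ CS * η) :
    Eg ≤ (⨅ a : {a : Fin d → ℂ // a ≠ 0},
        (rq Hh a.1 + CH * η) / (rq Sh a.1 + CS * η)) ∧
    (⨅ a : {a : Fin d → ℂ // a ≠ 0},
        (rq Hh a.1 + CH * η) / (rq Sh a.1 + CS * η)) ≤ Eg + ε := by
  have hEg : Eg < 0 := by linarith
  have hne : Nonempty {a : Fin d → ℂ // a ≠ 0} := by
    refine ⟨⟨fun _ => 1, ?_⟩⟩
    intro h
    have := congrFun h ⟨0, hd⟩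
    simp at this
  have key : ∀ a : {a : Fin d → ℂ // a ≠ 0},
      Eg ≤ (rq Hh a.1 + CH * η) / (rq Sh a.1 + CS * η) := by
    intro ⟨a, ha⟩
    have hS := hSpos a ha
    have h1 := abs_le.mp (hHc a ha)
    have h2 := abs_le.mp (hSc a ha)
    have hHSa := hHS' a ha
    have hD : 0 < rq Sh a + CS * η := by linarith [h2.2]
    rw [le_div_iff₀ hD]
    nlinarith [h1.2, h2.2, h2.1, h1.1]
  have bdd : BddBelow (Set.range fun a : {a : Fin d → ℂ // a ≠ 0} =>
      (rq Hh a.1 + CH * η) / (rq Sh a.1 + CS * η)) := by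
    refine ⟨Eg, ?_⟩
    rintro x ⟨a, rfl⟩
    exact key a
  refine ⟨le_ciInf key, ?_⟩
  refine le_of_forall_pos_le_add fun δ hδ => ?_
  set δ' : ℝ := min δ (-(Eg + ε) / 2) with hδ'def
  have hδ' : 0 < δ' := lt_min hδ (by linarith)
  have hlt : (⨅ a : {a : Fin d → ℂ // a ≠ 0},
      (rq H a.1 + 2 * CH * η) / (rq S a.1 + 2 * CS * η)) < Eg + ε + δ' := by
    rw [hsol]; linarith
  obtain ⟨a, ha⟩ := exists_lt_of_ciInf_lt hlt
  obtain ⟨a, hane⟩ := a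
  have hS := hSpos a hane
  have hD' : 0 < rq S a + 2 * CS * η := by nlinarith
  have hEneg : (rq H a + 2 * CH * η) / (rq S a + 2 * CS * η) < 0 := by
    refine lt_of_lt_of_le ha ?_
    have : δ' ≤ -(Eg + ε) / 2 := min_le_right _ _
    linarith
  have hnum : rq H a + 2 * CH * η < 0 := by
    rcases div_neg_iff.mp hEneg with h | h
    · linarith [h.2]
    · exact h.1
  have h1 := abs_le.mp (hHc a hane)
  have h2 := abs_le.mp (hSc a hane)
  have hD : 0 < rq Sh a + CS * η := by linarith [h2.2]
  have hest : (rq Hh a + CH * η) / (rq Sh a + CS * η) ≤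
      (rq H a + 2 * CH * η) / (rq S a + 2 * CS * η) := by
    rw [div_le_div_iff₀ hD hD']
    nlinarith [h1.2, h2.1, h2.2]
  calc (⨅ a : {a : Fin d → ℂ // a ≠ 0},
      (rq Hh a.1 + CH * η) / (rq Sh a.1 + CS * η)) ≤
        (rq Hh a + CH * η) / (rq Sh a + CS * η) := ciInf_le bdd ⟨a, hane⟩
    _ ≤ (rq H a + 2 * CH * η) / (rq S a + 2 * CS * η) := hest
    _ ≤ Eg + ε + δ := by
        have : δ' ≤ δ := min_le_left _ _
        linarith

lemma cheb {Ω : Type*} [MeasureSpace Ω] [IsProbabilityMeasure (ℙ : Measure Ω)]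
    {X : Ω → ℂ} (hm : Measurable X) (hL2 : MemLp X 2 ℙ) (μ0 : ℂ) {t : ℝ} (ht : 0 < t) :
    ℙ {ω : Ω | t ≤ ‖X ω - μ0‖} ≤ ENNReal.ofReal ((∫ ω, ‖X ω - μ0‖ ^ 2 ∂ℙ) / t ^ 2) := by
  have hL2' : MemLp (fun ω => X ω - μ0) 2 ℙ := hL2.sub (memLp_const μ0)
  have hint : Integrable (fun ω => ‖X ω - μ0‖ ^ 2) ℙ := by
    have h := hL2'.integrable_norm_rpow (by norm_num) (by norm_num)
    simpa [ENNReal.toReal_ofNat, Real.rpow_natCast] using h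
  have ht2 : (0:ℝ) < t ^ 2 := by positivity
  have hsub : {ω : Ω | t ≤ ‖X ω - μ0‖} ⊆
      {ω : Ω | ENNReal.ofReal (t ^ 2) ≤ ENNReal.ofReal (‖X ω - μ0‖ ^ 2)} := by
    intro ω hω
    exact ENNReal.ofReal_le_ofReal
      (by have : t ≤ ‖X ω - μ0‖ := hω; nlinarith [norm_nonneg (X ω - μ0)])
  refine (measure_mono hsub).trans ?_
  have hmeas : AEMeasurable (fun ω => ENNReal.ofReal (‖X ω - μ0‖ ^ 2)) ℙ :=
    (((hm.sub_const μ0).norm.pow_const 2).ennreal_ofReal).aemeasurable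
  have h1 := meas_ge_le_lintegral_div hmeas (ε := ENNReal.ofReal (t ^ 2))
    (by simp [ENNReal.ofReal_eq_zero]; linarith) ENNReal.ofReal_ne_top
  refine h1.trans ?_
  rw [ENNReal.ofReal_div_of_pos ht2,
    ← ofReal_integral_eq_lintegral_ofReal hint (Filter.Eventually.of_forall fun ω => by positivity)]

end Aux

theorem stmt7 {d : ℕ} (hd : 1 ≤ d)
    {Ω : Type*} [MeasureSpace Ω] [IsProbabilityMeasure (ℙ : Measure Ω)]
    (H S : Matrix (Fin d) (Fin d) ℂ)
    (Hhat Shat : Ω → Matrix (Fin d) (Fin d) ℂ)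
    (hH : H.IsHermitian) (hS : S.IsHermitian) (hSpd : S.PosDef)
    (hHhat : ∀ ω, (Hhat ω).IsHermitian) (hShat : ∀ ω, (Shat ω).IsHermitian)
    (hHhatMeas : ∀ k q : Fin d, Measurable fun ω => Hhat ω k q)
    (hShatMeas : ∀ k q : Fin d, Measurable fun ω => Shat ω k q)
    (hHhatL2 : ∀ k q : Fin d, MemLp (fun ω => Hhat ω k q) 2 ℙ)
    (hShatL2 : ∀ k q : Fin d, MemLp (fun ω => Shat ω k q) 2 ℙ)
    (CH CS Eg κ ε η M : ℝ) (hCH : 0 < CH) (hCS : 0 < CS)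
    (hκ0 : 0 < κ) (hκ1 : κ < 1) (hε0 : 0 < ε)
    (hHS : ∀ a : Fin d → ℂ, (star a ⬝ᵥ H.mulVec a).re ≥ Eg * (star a ⬝ᵥ S.mulVec a).re)
    -- ε exceeds the subspace error ε_K and E_g + ε < 0
    (hεK : ε > (⨅ a : {a : Fin d → ℂ // a ≠ 0}, rq H a.1 / rq S a.1) - Eg)
    (hneg : Eg + ε < 0)
    -- η > 0 is the solution of min_{a ≠ 0} E'(η, a) = E_g + ε
    (hη : 0 < η)
    (hsol : (⨅ a : {a : Fin d → ℂ // a ≠ 0},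
        (rq H a.1 + 2 * CH * η) / (rq S a.1 + 2 * CS * η)) = Eg + ε)
    -- the measurement number M = 4 d⁴/(κ η²)
    (hM : M = 4 * (d : ℝ) ^ 4 / (κ * η ^ 2))
    -- the upper-triangular entries of Ĥ and Ŝ are mutually independent
    (hind : iIndepFun
      (fun (i : Bool × {p : Fin d × Fin d // p.1 ≤ p.2}) (ω : Ω) =>
        if i.1 then Hhat ω i.2.1.1 i.2.1.2 else Shat ω i.2.1.1 i.2.1.2) ℙ)
    -- unbiasedness
    (hHmean : ∀ k q : Fin d, ∫ ω, Hhat ω k q ∂ℙ = H k q)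
    (hSmean : ∀ k q : Fin d, ∫ ω, Shat ω k q ∂ℙ = S k q)
    -- variance bounds
    (hHvar : ∀ k q : Fin d, ∫ ω, ‖Hhat ω k q - H k q‖ ^ 2 ∂ℙ ≤ 2 * CH ^ 2 / M)
    (hSvar : ∀ k q : Fin d, ∫ ω, ‖Shat ω k q - S k q‖ ^ 2 ∂ℙ ≤ 2 * CS ^ 2 / M) :
    ℙ {ω | Eg ≤ (⨅ a : {a : Fin d → ℂ // a ≠ 0},
          (rq (Hhat ω) a.1 + CH * η) / (rq (Shat ω) a.1 + CS * η)) ∧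
        (⨅ a : {a : Fin d → ℂ // a ≠ 0},
          (rq (Hhat ω) a.1 + CH * η) / (rq (Shat ω) a.1 + CS * η)) ≤ Eg + ε}
      ≥ ENNReal.ofReal (1 - κ) := by
  have hdpos : (0:ℝ) < d := by exact_mod_cast Nat.lt_of_lt_of_le Nat.zero_lt_one hd
  set tH : ℝ := CH * η / d with htHdef
  set tS : ℝ := CS * η / d with htSdef
  have htH : 0 < tH := by positivity
  have htS : 0 < tS := by positivity
  -- per-entry Chebyshev bounds
  have hboundH : ∀ k q : Fin d, ℙ {ω : Ω | tH ≤ ‖Hhat ω k q - H k q‖} ≤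
      ENNReal.ofReal (κ / (2 * (d:ℝ) ^ 2)) := by
    intro k q
    refine (cheb (hHhatMeas k q) (hHhatL2 k q) (H k q) htH).trans
      (ENNReal.ofReal_le_ofReal ?_)
    have heq : (2 * CH ^ 2 / M) / tH ^ 2 = κ / (2 * (d:ℝ) ^ 2) := by
      rw [htHdef, hM]
      field_simp
      ring
    rw [← heq]
    exact div_le_div_of_nonneg_right (hHvar k q) (by positivity) |>.trans_eq rfl
  have hboundS : ∀ k q : Fin d, ℙ {ω : Ω | tS ≤ ‖Shat ω k q - S k q‖} ≤
      ENNReal.ofReal (κ / (2 * (d:ℝ) ^ 2)) := by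
    intro k q
    refine (cheb (hShatMeas k q) (hShatL2 k q) (S k q) htS).trans
      (ENNReal.ofReal_le_ofReal ?_)
    have heq : (2 * CS ^ 2 / M) / tS ^ 2 = κ / (2 * (d:ℝ) ^ 2) := by
      rw [htSdef, hM]
      field_simp
      ring
    rw [← heq]
    exact div_le_div_of_nonneg_right (hSvar k q) (by positivity) |>.trans_eq rfl
  -- the bad event
  set Bad : Bool × Fin d × Fin d → Set Ω := fun i =>
    if i.1 then {ω : Ω | tH ≤ ‖Hhat ω i.2.1 i.2.2 - H i.2.1 i.2.2‖}
    else {ω : Ω | tS ≤ ‖Shat ω i.2.1 i.2.2 - S i.2.1 i.2.2‖} with hBaddef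
  have hBadMeas : ∀ i, MeasurableSet (Bad i) := by
    rintro ⟨b, k, q⟩
    rcases b with _ | _
    · exact measurableSet_le measurable_const ((hShatMeas k q).sub_const _).norm
    · exact measurableSet_le measurable_const ((hHhatMeas k q).sub_const _).norm
  have hBadBound : ∀ i, ℙ (Bad i) ≤ ENNReal.ofReal (κ / (2 * (d:ℝ) ^ 2)) := by
    rintro ⟨b, k, q⟩
    rcases b with _ | _
    · exact hboundS k q
    · exact hboundH k q
  have hUnion : ℙ (⋃ i, Bad i) ≤ ENNReal.ofReal κ := by
    calc ℙ (⋃ i, Bad i) ≤ ∑' i, ℙ (Bad i) := measure_iUnion_le _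
      _ ≤ ∑' _i : Bool × Fin d × Fin d, ENNReal.ofReal (κ / (2 * (d:ℝ) ^ 2)) :=
          ENNReal.tsum_le_tsum hBadBound
      _ = (Fintype.card (Bool × Fin d × Fin d)) *
          ENNReal.ofReal (κ / (2 * (d:ℝ) ^ 2)) := by
          rw [tsum_fintype]
          simp [Finset.sum_const, nsmul_eq_mul, Finset.card_univ]
      _ = ENNReal.ofReal ((2 * d * d : ℕ) * (κ / (2 * (d:ℝ) ^ 2))) := by
          rw [ENNReal.ofReal_mul (by positivity), ENNReal.ofReal_natCast]
          simp [Fintype.card_prod, mul_assoc]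
      _ = ENNReal.ofReal κ := by
          congr 1
          push_cast
          field_simp
  -- good event inclusion
  have hsubset : (⋃ i, Bad i)ᶜ ⊆ {ω : Ω | Eg ≤ (⨅ a : {a : Fin d → ℂ // a ≠ 0},
          (rq (Hhat ω) a.1 + CH * η) / (rq (Shat ω) a.1 + CS * η)) ∧
        (⨅ a : {a : Fin d → ℂ // a ≠ 0},
          (rq (Hhat ω) a.1 + CH * η) / (rq (Shat ω) a.1 + CS * η)) ≤ Eg + ε} := by
    intro ω hω
    rw [Set.mem_compl_iff, Set.mem_iUnion] at hω
    push_neg at hω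
    have hHe : ∀ k q, ‖Hhat ω k q - H k q‖ ≤ tH := by
      intro k q
      have := hω (true, k, q)
      simp only [hBaddef, if_pos] at this
      exact le_of_not_ge this
    have hSe : ∀ k q, ‖Shat ω k q - S k q‖ ≤ tS := by
      intro k q
      have := hω (false, k, q)
      simp only [hBaddef, if_neg Bool.false_ne_true] at this
      exact le_of_not_ge this
    have hHc : ∀ a : Fin d → ℂ, a ≠ 0 → |rq (Hhat ω) a - rq H a| ≤ CH * η := by
      intro a ha
      have := rq_sub (Hhat ω) H ha tH htH.le (fun k q => hHe k q)
      have hdt : (d:ℝ) * tH = CH * η := by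
        rw [htHdef]; field_simp
      linarith [this, hdt.le]
    have hSc : ∀ a : Fin d → ℂ, a ≠ 0 → |rq (Shat ω) a - rq S a| ≤ CS * η := by
      intro a ha
      have := rq_sub (Shat ω) S ha tS htS.le (fun k q => hSe k q)
      have hdt : (d:ℝ) * tS = CS * η := by
        rw [htSdef]; field_simp
      linarith [this, hdt.le]
    have hSpos : ∀ a : Fin d → ℂ, a ≠ 0 → 0 < rq S a := by
      intro a ha
      have h := hSpd.dotProduct_mulVec_pos ha
      have hre : 0 < (star a ⬝ᵥ S.mulVec a).re := by
        have := (Complex.lt_def.mp h).1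
        simpa using this
      exact div_pos hre (dot_self_pos ha)
    have hHS' : ∀ a : Fin d → ℂ, a ≠ 0 → Eg * rq S a ≤ rq H a := by
      intro a ha
      have hn := dot_self_pos ha
      rw [rq, rq, mul_div_assoc']
      exact (div_le_div_iff_of_pos_right hn).mpr (hHS a)
    exact det_lemma hd H S (Hhat ω) (Shat ω) CH CS Eg ε η hCH hCS hη hε0
      hSpos hHS' hneg hsol hHc hSc
  -- conclude
  have hgoodMeas : MeasurableSet (⋃ i, Bad i) := MeasurableSet.iUnion hBadMeas
  calc ENNReal.ofReal (1 - κ) = 1 - ENNReal.ofReal κ := by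
        rw [ENNReal.ofReal_sub _ hκ0.le, ENNReal.ofReal_one]
    _ ≤ 1 - ℙ (⋃ i, Bad i) := tsub_le_tsub_left hUnion 1
    _ = ℙ (⋃ i, Bad i)ᶜ := (prob_compl_eq_one_sub hgoodMeas).symm
    _ ≤ _ := measure_mono hsubset
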